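/- Let k ≥ 2 be an integer and let φ : ℕ → ℕ be a nondecreasing function such that φ(n) ≥ n for all n ∈ ℕ and φ(0) = 0. Then there exist a nontrivial closed class A of decision tables from M_k^∞ and a bounded complexity measure ψ such that the function H^∞_{ψ,A} is everywhere defined and φ(n) ≤ H^∞_{ψ,A}(n) ≤ φ(n) + n for all n ∈ ℕ. -/

import Mathlib

open Classical

noncomputable section

/-- A decision table with many-valued decisions over `E_k = {0,…,k-1}`.
Columns are labeled with attributes `f_i` identified with their indices `i : ℕ`;
a row is a function `ℕ → ℕ` supported on the attribute set, with values `< k`;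
each row is labeled with a nonempty finite set of decisions. -/
structure Table (k : ℕ) where
  attrs : Finset ℕ
  rows : Finset (ℕ → ℕ)
  dec : (ℕ → ℕ) → Finset ℕ
  rows_mem : ∀ r ∈ rows, (∀ i ∈ attrs, r i < k) ∧ (∀ i ∉ attrs, r i = 0)
  dec_nonempty : ∀ r ∈ rows, (dec r).Nonempty

namespace Table

variable {k : ℕ}

/-- a row satisfies a word (a list of (attribute, value) pairs) -/
def rowSat (r : ℕ → ℕ) (α : List (ℕ × ℕ)) : Prop := ∀ q ∈ α, r q.1 = q.2

/-- the word belongs to `Ω_k(T)` -/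
def wordOk (T : Table k) (α : List (ℕ × ℕ)) : Prop := ∀ q ∈ α, q.1 ∈ T.attrs ∧ q.2 < k

/-- the subtable `Tα` -/
def applyWord (T : Table k) (α : List (ℕ × ℕ)) : Table k where
  attrs := T.attrs
  rows := T.rows.filter (fun r => rowSat r α)
  dec := T.dec
  rows_mem := fun r hr => T.rows_mem r (Finset.mem_filter.mp hr).1
  dec_nonempty := fun r hr => T.dec_nonempty r (Finset.mem_filter.mp hr).1

/-- `T ∈ M_k^{∞c}` : the table has a common decision -/
def hasCommon (T : Table k) : Prop := ∃ d : ℕ, ∀ r ∈ T.rows, d ∈ T.dec r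

/-- `N(T)` : number of rows -/
def NT (T : Table k) : ℕ := T.rows.card

/-- `W(T)` : number of columns (`0` for the empty table `Λ`) -/
def WT (T : Table k) : ℕ := if T.rows = ∅ then 0 else T.attrs.card

/-- the closure `[T]` of `T` under removal of columns and changing of decisions:
`Q = J(ν, I(D,T))` for some `D ⊆ At(T)` and some `ν` (the decision labeling of `Q`
on its rows is arbitrary, i.e. is the arbitrary `ν` with nonempty finite values). -/
def closureT (T : Table k) : Set (Table k) :=
  {Q | ∃ D : Finset ℕ, D ⊆ T.attrs ∧ Q.attrs = T.attrs \ D ∧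
      Q.rows = T.rows.image (fun r i => if i ∈ T.attrs \ D then r i else 0)}

end Table

/-- a closed class: `[A] = A` -/
def IsClosedClass {k : ℕ} (A : Set (Table k)) : Prop := ∀ T ∈ A, Table.closureT T ⊆ A

/-- a nontrivial class: contains nonempty tables -/
def NontrivialClass {k : ℕ} (A : Set (Table k)) : Prop := ∃ T ∈ A, T.rows.Nonempty

/-- the part of a `k`-decision tree below one edge leaving the root -/
inductive DTree (k : ℕ) : Type
  | leaf (d : ℕ) : DTree k
  | node (a : ℕ) (n : ℕ) (lab : Fin (n + 1) → ℕ) (ch : Fin (n + 1) → DTree k) : DTree k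

namespace DTree

variable {k : ℕ}

/-- the set of pairs (π(τ), terminal decision) over complete paths τ -/
def paths : DTree k → Set (List (ℕ × ℕ) × ℕ)
  | leaf d => {([], d)}
  | node a _ lab ch =>
      ⋃ i, (fun p : List (ℕ × ℕ) × ℕ => ((a, lab i) :: p.1, p.2)) '' paths (ch i)

/-- edge labels belong to `E_k` -/
def wf : DTree k → Prop
  | leaf _ => True
  | node _ _ lab ch => (∀ i, lab i < k) ∧ ∀ i, wf (ch i)

/-- edges leaving any node are labeled with pairwise different numbers -/
def det : DTree k → Prop
  | leaf _ => True
  | node _ _ lab ch => Function.Injective lab ∧ ∀ i, det (ch i)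

/-- the set of attributes attached to nodes -/
def attrs : DTree k → Finset ℕ
  | leaf _ => ∅
  | node a _ _ ch => insert a (Finset.univ.biUnion fun i => attrs (ch i))

end DTree

/-- a `k`-decision tree: an unlabeled root with `n+1` unlabeled edges leaving it -/
structure KTree (k : ℕ) where
  n : ℕ
  sub : Fin (n + 1) → DTree k

namespace KTree

variable {k : ℕ}

def paths (Γ : KTree k) : Set (List (ℕ × ℕ) × ℕ) := ⋃ i, (Γ.sub i).paths

def wf (Γ : KTree k) : Prop := ∀ i, (Γ.sub i).wf

def attrs (Γ : KTree k) : Finset ℕ := Finset.univ.biUnion fun i => (Γ.sub i).attrs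

end KTree

/-- partially bounded complexity measure on words over `P` -/
structure PBCM where
  toFun : List ℕ → ℕ
  pos : ∀ α, toFun α = 0 ↔ α = []
  perm : ∀ α β, List.Perm α β → toFun α = toFun β
  mono : ∀ α β, toFun α ≤ toFun (α ++ β)
  subadd : ∀ α β, toFun (α ++ β) ≤ toFun α + toFun β

/-- bounded complexity measure -/
structure BCM extends PBCM where
  bdd : ∀ α, α.length ≤ toFun α

/-- extension of ψ to words over pairs `(f_i, δ)` -/
def PBCM.onWord (ψ : PBCM) (α : List (ℕ × ℕ)) : ℕ := ψ.toFun (α.map Prod.fst)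

/-- extension of ψ to finite sets of attributes -/
def PBCM.onSet (ψ : PBCM) (s : Finset ℕ) : ℕ := ψ.toFun (s.sort (· ≤ ·))

/-- the depth `h` -/
def depthCM : BCM where
  toFun := List.length
  pos := fun α => List.length_eq_zero_iff
  perm := fun _ _ h => h.length_eq
  mono := fun α β => by simp
  subadd := fun α β => by simp
  bdd := fun _ => le_rfl

/-- `ψ(Γ)` : complexity of a decision tree -/
def treeComp {k : ℕ} (ψ : PBCM) (Γ : KTree k) : ℕ :=
  sSup {c | ∃ p ∈ Γ.paths, ψ.onWord p.1 = c}

/-- `Γ` is a nondeterministic decision tree for the (nonempty) table `T` -/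
def isNDT {k : ℕ} (T : Table k) (Γ : KTree k) : Prop :=
  T.rows.Nonempty ∧ Γ.wf ∧ Γ.attrs ⊆ T.attrs ∧
  (∀ r ∈ T.rows, ∃ p ∈ Γ.paths, Table.rowSat r p.1) ∧
  (∀ p ∈ Γ.paths, (T.applyWord p.1).rows = ∅ ∨ ∀ r ∈ (T.applyWord p.1).rows, p.2 ∈ T.dec r)

/-- `Γ` is a deterministic decision tree for `T` -/
def isDDT {k : ℕ} (T : Table k) (Γ : KTree k) : Prop :=
  isNDT T Γ ∧ Γ.n = 0 ∧ ∀ i, (Γ.sub i).det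

/-- `ψ^a(T)` -/
def psiA {k : ℕ} (ψ : PBCM) (T : Table k) : ℕ :=
  sInf {c | ∃ Γ : KTree k, isNDT T Γ ∧ treeComp ψ Γ = c}

/-- `ψ^d(T)` -/
def psiD {k : ℕ} (ψ : PBCM) (T : Table k) : ℕ :=
  sInf {c | ∃ Γ : KTree k, isDDT T Γ ∧ treeComp ψ Γ = c}

/-- `m_ψ(T)` -/
def mpsi {k : ℕ} (ψ : PBCM) (T : Table k) : ℕ :=
  if T.rows = ∅ then 0 else T.attrs.sup fun i => ψ.toFun [i]

/-- `W_ψ(T)` -/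
def Wpsi {k : ℕ} (ψ : PBCM) (T : Table k) : ℕ :=
  if T.rows = ∅ then 0 else ψ.onSet T.attrs

/-- a tuple `δ̄ ∈ E_k^{|At(T)|}` -/
def validTuple {k : ℕ} (T : Table k) (δ : ℕ → ℕ) : Prop :=
  (∀ i ∈ T.attrs, δ i < k) ∧ ∀ i ∉ T.attrs, δ i = 0

/-- `M_ψ(T, δ̄)` -/
def MpsiAt {k : ℕ} (ψ : PBCM) (T : Table k) (δ : ℕ → ℕ) : ℕ :=
  sInf {p | ∃ s : Finset ℕ, s ⊆ T.attrs ∧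
    (T.applyWord ((s.sort (· ≤ ·)).map fun i => (i, δ i))).hasCommon ∧ ψ.onSet s = p}

/-- `M_ψ(T)` -/
def Mpsi {k : ℕ} (ψ : PBCM) (T : Table k) : ℕ :=
  if T.hasCommon then 0 else sSup {p | ∃ δ, validTuple T δ ∧ MpsiAt ψ T δ = p}

/-- `U` is a `(ψ,n)`-cover of `T` -/
def isCover {k : ℕ} (ψ : PBCM) (n : ℕ) (T : Table k) (U : Finset (List (ℕ × ℕ))) : Prop :=
  (∀ α ∈ U, T.wordOk α ∧ ψ.onWord α ≤ n) ∧ ∀ r ∈ T.rows, ∃ α ∈ U, Table.rowSat r α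

/-- `U` is an irreducible `(ψ,n)`-cover of `T` -/
def isIrredCover {k : ℕ} (ψ : PBCM) (n : ℕ) (T : Table k) (U : Finset (List (ℕ × ℕ))) : Prop :=
  isCover ψ n T U ∧ ∀ V ⊂ U, ¬ isCover ψ n T V

/-- `l_ψ(T,n)` : maximum cardinality of an irreducible `(ψ,n)`-cover -/
def lpsi {k : ℕ} (ψ : PBCM) (T : Table k) (n : ℕ) : ℕ :=
  sSup {c | ∃ U, isIrredCover ψ n T U ∧ U.card = c}

/-- the set `{ψ^d(T) : T ∈ A, ψ^a(T) ≤ n}`; `H^∞_{ψ,A}(n)` is defined iff this set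
is finite, and is then its maximum -/
def HSet {k : ℕ} (ψ : PBCM) (A : Set (Table k)) (n : ℕ) : Set ℕ :=
  {c | ∃ T ∈ A, psiA ψ T ≤ n ∧ psiD ψ T = c}

/-- `H^∞_{ψ,A}(n)` (as the max = sSup of the finite set `HSet ψ A n`) -/
def Hfun {k : ℕ} (ψ : PBCM) (A : Set (Table k)) (n : ℕ) : ℕ := sSup (HSet ψ A n)

/-- the set `{l_ψ(T,n) : T ∈ A}` -/
def LSet {k : ℕ} (ψ : PBCM) (A : Set (Table k)) (n : ℕ) : Set ℕ :=
  {c | ∃ T ∈ A, lpsi ψ T n = c}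

/-- `L_{ψ,A}(n)` -/
def Lfun {k : ℕ} (ψ : PBCM) (A : Set (Table k)) (n : ℕ) : ℕ := sSup (LSet ψ A n)

/-- `H_D` for an infinite `D ⊆ ℕ` : `H_D(n)` is the largest element of `D` that is `≤ n`
(and `0` if there is none) -/
def HDfun (D : Set ℕ) (n : ℕ) : ℕ := sSup {d | d ∈ D ∧ d ≤ n}

/-- a complete table from `M_2^∞` -/
def isComplete (Q : Table 2) : Prop := Q.NT = 2 ^ Q.attrs.card

/-- `Z(T)` : maximum number of columns in a complete table from `[T]` (`0` if none) -/
def Zt (T : Table 2) : ℕ := sSup {c | ∃ Q ∈ Table.closureT T, isComplete Q ∧ Q.WT = c}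

/-- the set `{Z(T) : T ∈ A_ψ(n)}` -/
def ZSet (ψ : PBCM) (A : Set (Table 2)) (n : ℕ) : Set ℕ :=
  {c | ∃ T ∈ A, mpsi ψ T ≤ n ∧ Zt T = c}

/-- `Z_{ψ,A}(n)` -/
def Zfun (ψ : PBCM) (A : Set (Table 2)) (n : ℕ) : ℕ := sSup (ZSet ψ A n)

/-- annihilating word for `T` -/
def isAnnih (T : Table 2) (α : List (ℕ × ℕ)) : Prop :=
  T.wordOk α ∧ (∀ p ∈ α, ∀ q ∈ α, p.1 = q.1 → p.2 = q.2) ∧ (T.applyWord α).rows = ∅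

/-- irreducible annihilating word for `T` -/
def isIrredAnnih (T : Table 2) (α : List (ℕ × ℕ)) : Prop :=
  isAnnih T α ∧ ∀ β, β.Sublist α → β ≠ α → ¬ isAnnih T β

/-- `G(T)` : maximum length of an irreducible annihilating word (`0` if none) -/
def Gt (T : Table 2) : ℕ := sSup {c | ∃ α, isIrredAnnih T α ∧ α.length = c}

/-- the set `{G(T) : T ∈ A_ψ(n)}` -/
def GSet (ψ : PBCM) (A : Set (Table 2)) (n : ℕ) : Set ℕ :=
  {c | ∃ T ∈ A, mpsi ψ T ≤ n ∧ Gt T = c}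

/-- `G_{ψ,A}(n)` -/
def Gfun (ψ : PBCM) (A : Set (Table 2)) (n : ℕ) : ℕ := sSup (GSet ψ A n)

/-! ### The tables `T_k` and `T_k^*` built from the triangle-shaped graph `G_k` -/

/-- `m(k) = k(k+1)/2` : number of nodes of `G_k` -/
def mnum (k : ℕ) : ℕ := k * (k + 1) / 2

/-- the layer of node `i` of `G_k` : the unique `L` with `m(L-1) < i ≤ m(L)` -/
def layer (i : ℕ) : ℕ := sInf {L | i ≤ mnum L}

/-- left child `l(i) = i + layer i`; right child `p(i) = i + layer i + 1` -/
def lchild (i : ℕ) : ℕ := i + layer i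

def rchild (i : ℕ) : ℕ := i + layer i + 1

/-- the map `ν_k : E_2^{m(k)} → P(ω)` -/
def nuk (k : ℕ) (δ : ℕ → ℕ) : Finset ℕ :=
  (Finset.range (mnum k + 1)).filter fun i =>
    if i = 0 then δ 1 = 0
    else if layer i = k then δ i = 1
    else δ i = 1 ∧ δ (lchild i) = 0 ∧ δ (rchild i) = 0

/-- all tuples over `E_k` supported on the attribute set `s` -/
def allRows (k : ℕ) (s : Finset ℕ) : Finset (ℕ → ℕ) :=
  (s.pi fun _ => Finset.range k).image fun f i => if h : i ∈ s then f i h else 0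

/-- the table with attribute set `s`, all possible rows, and decision labeling `d` -/
def fullTable (k : ℕ) (s : Finset ℕ) (d : (ℕ → ℕ) → Finset ℕ) : Table k where
  attrs := s
  rows := allRows k s
  dec := fun r => if (d r).Nonempty then d r else {0}
  rows_mem := by
    intro r hr
    simp only [allRows, Finset.mem_image] at hr
    obtain ⟨f, hf, rfl⟩ := hr
    refine ⟨fun i hi => ?_, fun i hi => ?_⟩
    · have h := (Finset.mem_pi.mp hf) i hi
      simp only [Finset.mem_range] at h
      simpa [hi] using h
    · simp [hi]
  dec_nonempty := by
    intro r _
    by_cases h : (d r).Nonempty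
    · simp [h]
    · simp [h]

/-- the complete table `T_k` with `m(k)` columns `f_1, …, f_{m(k)}` and `2^{m(k)}` rows,
each row `δ̄` labeled with `ν_k(δ̄)` (which is always nonempty) -/
def Tk (k : ℕ) : Table 2 := fullTable 2 (Finset.Icc 1 (mnum k)) (nuk k)

/-- the `j`-th node of the complete path of `G_k` determined by the choices `c` -/
def pathNode (c : ℕ → Bool) : ℕ → ℕ
  | 0 => 1
  | j + 1 => if c j then lchild (pathNode c j) else rchild (pathNode c j)

/-- `T_k^*` : the subtable of `T_k` whose rows are exactly the characteristic tuples
of complete paths of `G_k` -/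
def Tstar (k : ℕ) : Table 2 where
  attrs := (Tk k).attrs
  rows := (Tk k).rows.filter fun r =>
    ∃ c : ℕ → Bool, ∀ i ∈ Finset.Icc 1 (mnum k), (r i = 1 ↔ ∃ j < k, pathNode c j = i)
  dec := (Tk k).dec
  rows_mem := fun r hr => (Tk k).rows_mem r (Finset.mem_filter.mp hr).1
  dec_nonempty := fun r hr => (Tk k).dec_nonempty r (Finset.mem_filter.mp hr).1

/-- `r(T)` for a subtable `T` of `T_k^*` : the number of distinct decision sets
`ν_k(δ̄)` among the rows `δ̄` of `T` -/
def rnum (k : ℕ) (T : Table 2) : ℕ := (T.rows.image (nuk k)).card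

end

/-!
Give the attribute `Nat.pair j i` the weight `j + 1` and let `ψ` be the total weight of a word.
For each `j` take the table whose rows are the unit vectors `e_a`, `a` running over
`m = φ (j + 1) / (j + 1) + 2` attributes of weight `j + 1`, with `e_a` labelled by `{a}`.
Guessing the attribute of value `1` gives `ψ^a ≤ j + 1`, while a deterministic tree has to query
all but one attribute on some path, so `ψ^d ≥ (j + 1) (m - 1) ≥ φ (j + 1)`.
Let `A` be the union of the closures of these tables. Querying in turn all attributes of a table of
`A` but one (one that was removed, if any) solves it deterministically at cost at most
`(j + 1) (m - 1) ≤ φ (j + 1) + j + 1`. A table coming from a block of weight `j + 1 > n` has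
`ψ^a ≤ n` only if some tree of cost `< j + 1`, hence the empty query, solves it, i.e. if it has a
common decision, and then `ψ^d = 0`. Monotonicity of `φ` gives `φ n ≤ H(n) ≤ φ n + n`.
-/

def weightCM (w : ℕ → ℕ) (hw : ∀ a, 0 < w a) : BCM where
  toFun α := (α.map w).sum
  pos α := by
    cases α with
    | nil => simp
    | cons a l => simp [(hw a).ne']
  perm _ _ h := (h.map w).sum_eq
  mono α β := by simp
  subadd α β := by simp
  bdd α := by
    induction α with
    | nil => simp
    | cons a l ih =>
      have := hw a
      simp only [List.length_cons, List.map_cons, List.sum_cons]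
      omega

lemma weightCM_toFun_of_forall_eq {w : ℕ → ℕ} {hw : ∀ a, 0 < w a} {n : ℕ} {α : List ℕ}
    (h : ∀ a ∈ α, w a = n) : (weightCM w hw).toFun α = n * α.length := by
  change (α.map w).sum = _
  rw [List.map_congr_left h, List.map_const', List.sum_replicate, smul_eq_mul, mul_comm]

namespace Table

variable {k : ℕ}

lemma rowSat_nil (r : ℕ → ℕ) : rowSat r [] := fun _ h => absurd h List.not_mem_nil

lemma rowSat_cons {r : ℕ → ℕ} {q : ℕ × ℕ} {α : List (ℕ × ℕ)} :
    rowSat r (q :: α) ↔ r q.1 = q.2 ∧ rowSat r α :=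
  List.forall_mem_cons

lemma mem_applyWord_rows {T : Table k} {α : List (ℕ × ℕ)} {r : ℕ → ℕ} :
    r ∈ (T.applyWord α).rows ↔ r ∈ T.rows ∧ rowSat r α :=
  Finset.mem_filter

lemma applyWord_nil_rows (T : Table k) : (T.applyWord []).rows = T.rows :=
  Finset.filter_true_of_mem fun r _ => rowSat_nil r

lemma self_mem_closureT (T : Table k) : T ∈ closureT T := by
  refine ⟨∅, Finset.empty_subset _, by simp, ?_⟩
  rw [Finset.image_congr (g := id) fun r hr => funext fun i => ?_, Finset.image_id]
  by_cases hi : i ∈ T.attrs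
  · simp [hi]
  · simp [hi, (T.rows_mem r hr).2 i hi]

lemma closureT_subset_closureT {T Q : Table k} (hQ : Q ∈ closureT T) :
    closureT Q ⊆ closureT T := by
  obtain ⟨D, hD, hattrs, hrows⟩ := hQ
  rintro Q' ⟨D', hD', hattrs', hrows'⟩
  have hS : (T.attrs \ D) \ D' = T.attrs \ (D ∪ D') := by
    rw [sdiff_sdiff_left, Finset.sup_eq_union]
  rw [hattrs] at hD' hattrs' hrows'
  refine ⟨D ∪ D', Finset.union_subset hD fun x hx => (Finset.mem_sdiff.mp (hD' hx)).1,
    hattrs'.trans hS, ?_⟩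
  rw [hrows', hrows, Finset.image_image, hS]
  refine Finset.image_congr fun r _ => funext fun i => ?_
  by_cases h : i ∈ T.attrs \ (D ∪ D') <;> simp_all

end Table

lemma isClosedClass_iUnion_closureT {k : ℕ} {ι : Type*} (T : ι → Table k) :
    IsClosedClass (⋃ i, Table.closureT (T i)) := by
  intro Q hQ
  obtain ⟨i, hi⟩ := Set.mem_iUnion.mp hQ
  exact (Table.closureT_subset_closureT hi).trans
    (Set.subset_iUnion (fun i => Table.closureT (T i)) i)

namespace DTree

variable {k : ℕ}

lemma mem_paths_node {a m : ℕ} {lab : Fin (m + 1) → ℕ} {ch : Fin (m + 1) → DTree k}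
    {p : List (ℕ × ℕ) × ℕ} :
    p ∈ (node a m lab ch).paths ↔ ∃ i, ∃ q ∈ (ch i).paths, p = ((a, lab i) :: q.1, q.2) := by
  simp only [paths, Set.mem_iUnion, Set.mem_image, eq_comm]

lemma paths_finite (t : DTree k) : t.paths.Finite := by
  induction t with
  | leaf d => exact Set.finite_singleton _
  | node a m lab ch ih => exact Set.finite_iUnion fun i => (ih i).image _

lemma paths_nonempty (t : DTree k) : t.paths.Nonempty := by
  induction t with
  | leaf d => exact ⟨_, rfl⟩
  | node a m lab ch ih =>
    obtain ⟨q, hq⟩ := ih 0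
    exact ⟨_, mem_paths_node.mpr ⟨0, q, hq, rfl⟩⟩

lemma fst_mem_attrs {t : DTree k} {p : List (ℕ × ℕ) × ℕ} (hp : p ∈ t.paths) {q : ℕ × ℕ}
    (hq : q ∈ p.1) : q.1 ∈ t.attrs := by
  induction t generalizing p with
  | leaf d =>
    obtain rfl := hp
    simp at hq
  | node a m lab ch ih =>
    obtain ⟨i, p', hp', rfl⟩ := mem_paths_node.mp hp
    rcases List.mem_cons.mp hq with rfl | hq
    · exact Finset.mem_insert_self _ _
    · exact Finset.mem_insert_of_mem (Finset.mem_biUnion.mpr ⟨i, Finset.mem_univ _, ih i hp' hq⟩)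

end DTree

namespace KTree

variable {k : ℕ}

lemma paths_finite (Γ : KTree k) : Γ.paths.Finite :=
  Set.finite_iUnion fun i => (Γ.sub i).paths_finite

lemma fst_mem_attrs {Γ : KTree k} {p : List (ℕ × ℕ) × ℕ} (hp : p ∈ Γ.paths) {q : ℕ × ℕ}
    (hq : q ∈ p.1) : q.1 ∈ Γ.attrs := by
  obtain ⟨i, hi⟩ := Set.mem_iUnion.mp hp
  exact Finset.mem_biUnion.mpr ⟨i, Finset.mem_univ _, DTree.fst_mem_attrs hi hq⟩

def ofDTree (t : DTree k) : KTree k := ⟨0, fun _ => t⟩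

@[simp]
lemma paths_ofDTree (t : DTree k) : (ofDTree t).paths = t.paths := by
  simp only [ofDTree, paths]
  exact Set.iUnion_const _

@[simp]
lemma attrs_ofDTree (t : DTree k) : (ofDTree t).attrs = t.attrs := by
  ext
  exact Finset.mem_biUnion.trans ⟨fun ⟨_, _, h⟩ => h, fun h => ⟨0, Finset.mem_univ _, h⟩⟩

lemma exists_eq_ofDTree_of_n_eq_zero {Γ : KTree k} (h : Γ.n = 0) : ∃ t, Γ = ofDTree t := by
  obtain ⟨n, sub⟩ := Γ
  subst h
  refine ⟨sub 0, ?_⟩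
  simp only [ofDTree, mk.injEq, heq_eq_eq, true_and]
  exact funext fun i => congrArg sub (Fin.ext (Nat.lt_one_iff.mp i.isLt))

end KTree

section Complexity

variable {k : ℕ} (ψ : PBCM)

lemma le_treeComp {Γ : KTree k} {p : List (ℕ × ℕ) × ℕ} (hp : p ∈ Γ.paths) :
    ψ.onWord p.1 ≤ treeComp ψ Γ :=
  le_csSup (by exact (Γ.paths_finite.image fun p => ψ.onWord p.1).bddAbove) ⟨p, hp, rfl⟩

lemma treeComp_le {Γ : KTree k} {c : ℕ} (h : ∀ p ∈ Γ.paths, ψ.onWord p.1 ≤ c) :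
    treeComp ψ Γ ≤ c :=
  csSup_le' <| by
    rintro _ ⟨p, hp, rfl⟩
    exact h p hp

variable {ψ}

lemma psiA_le_treeComp {T : Table k} {Γ : KTree k} (hΓ : isNDT T Γ) :
    psiA ψ T ≤ treeComp ψ Γ :=
  Nat.sInf_le ⟨Γ, hΓ, rfl⟩

lemma psiD_le_treeComp {T : Table k} {Γ : KTree k} (hΓ : isDDT T Γ) :
    psiD ψ T ≤ treeComp ψ Γ :=
  Nat.sInf_le ⟨Γ, hΓ, rfl⟩

lemma le_psiD {T : Table k} {Γ : KTree k} (hΓ : isDDT T Γ) {c : ℕ}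
    (h : ∀ Γ, isDDT T Γ → c ≤ treeComp ψ Γ) : c ≤ psiD ψ T :=
  le_csInf ⟨_, Γ, hΓ, rfl⟩ <| by
    rintro _ ⟨Γ, hΓ, rfl⟩
    exact h Γ hΓ

lemma psiD_eq_zero_of_hasCommon {T : Table k} (hT : T.hasCommon) : psiD ψ T = 0 := by
  obtain ⟨d, hd⟩ := hT
  rcases T.rows.eq_empty_or_nonempty with hempty | hne
  · refine Nat.sInf_eq_zero.mpr (Or.inr (Set.eq_empty_of_forall_notMem ?_))
    rintro _ ⟨Γ, hΓ, -⟩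
    simpa [hempty] using hΓ.1.1
  · refine Nat.sInf_eq_zero.mpr (Or.inl ⟨KTree.ofDTree (.leaf d),
      ⟨⟨hne, fun _ => trivial, by simp [DTree.attrs], ?_, ?_⟩, rfl, fun _ => trivial⟩,
      Nat.le_zero.mp (treeComp_le ψ ?_)⟩)
    · exact fun r _ => ⟨([], d), by simp [DTree.paths], Table.rowSat_nil r⟩
    · simp only [KTree.paths_ofDTree, DTree.paths, Set.mem_singleton_iff, forall_eq,
        Table.applyWord_nil_rows]
      exact Or.inr hd
    · simp [DTree.paths, PBCM.onWord, ψ.pos]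

lemma hasCommon_of_treeComp_lt {T : Table k} {Γ : KTree k} {n : ℕ}
    (hT : ∀ a ∈ T.attrs, n ≤ ψ.toFun [a]) (hΓ : isNDT T Γ) (hlt : treeComp ψ Γ < n) :
    T.hasCommon := by
  obtain ⟨⟨r₀, hr₀⟩, -, hattrs, hcov, hdec⟩ := hΓ
  obtain ⟨p, hp, -⟩ := hcov r₀ hr₀
  -- a path covering a row and querying some attribute would already cost `n`
  cases hp₁ : p.1 with
  | cons q α =>
    have hq : n ≤ ψ.toFun [q.1] :=
      hT _ (hattrs (KTree.fst_mem_attrs hp (hp₁ ▸ List.mem_cons_self)))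
    have hmono : ψ.toFun [q.1] ≤ ψ.onWord p.1 := by
      rw [PBCM.onWord, hp₁]
      exact ψ.mono [q.1] _
    have := le_treeComp ψ hp
    omega
  | nil =>
    rcases hdec p hp with hempty | hall
    · rw [hp₁, Table.applyWord_nil_rows] at hempty
      simp [hempty] at hr₀
    · rw [hp₁, Table.applyWord_nil_rows] at hall
      exact ⟨p.2, hall⟩

lemma psiD_eq_zero_of_psiA_lt {T : Table k} {n : ℕ} (hT : ∀ a ∈ T.attrs, n ≤ ψ.toFun [a])
    (hlt : psiA ψ T < n) : psiD ψ T = 0 := by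
  by_cases hex : ∃ Γ, isNDT T Γ
  · obtain ⟨Γ, hΓ, hc⟩ := Nat.sInf_mem (s := {c | ∃ Γ, isNDT T Γ ∧ treeComp ψ Γ = c})
      (hex.elim fun Γ hΓ => ⟨_, Γ, hΓ, rfl⟩)
    exact psiD_eq_zero_of_hasCommon (hasCommon_of_treeComp_lt hT hΓ (hc ▸ hlt))
  · -- with no decision tree at all, `psiD` is the junk value `sInf ∅ = 0`
    refine Nat.sInf_eq_zero.mpr (Or.inr (Set.eq_empty_of_forall_notMem ?_))
    rintro _ ⟨Γ, hΓ, -⟩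
    exact hex ⟨Γ, hΓ.1⟩

end Complexity

namespace DTree

variable {k : ℕ} (dfun : ℕ → ℕ) (d₀ : ℕ)

def chain : List ℕ → DTree k
  | [] => .leaf d₀
  | a :: L => .node a 1 (fun i => i) ![chain L, .leaf (dfun a)]

variable {dfun d₀}

lemma mem_chain_paths_cons {a : ℕ} {L : List ℕ} {p : List (ℕ × ℕ) × ℕ} :
    p ∈ (chain (k := k) dfun d₀ (a :: L)).paths ↔
      (∃ q ∈ (chain (k := k) dfun d₀ L).paths, p = ((a, 0) :: q.1, q.2)) ∨
        p = ([(a, 1)], dfun a) := by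
  simp only [chain, mem_paths_node, Fin.exists_fin_succ]
  simp [paths]

lemma chain_wf (hk : 1 < k) (L : List ℕ) : (chain (k := k) dfun d₀ L).wf := by
  induction L with
  | nil => trivial
  | cons a L ih => exact ⟨fun i => i.isLt.trans_le hk, Fin.forall_fin_two.mpr ⟨ih, trivial⟩⟩

lemma chain_det (L : List ℕ) : (chain (k := k) dfun d₀ L).det := by
  induction L with
  | nil => trivial
  | cons a L ih => exact ⟨Fin.val_injective, Fin.forall_fin_two.mpr ⟨ih, trivial⟩⟩

lemma chain_attrs_subset (L : List ℕ) : (chain (k := k) dfun d₀ L).attrs ⊆ L.toFinset := by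
  induction L with
  | nil => simp [chain, attrs]
  | cons a L ih =>
    intro x hx
    rw [List.toFinset_cons]
    rcases Finset.mem_insert.mp hx with rfl | hx
    · exact Finset.mem_insert_self _ _
    · obtain ⟨i, -, hi⟩ := Finset.mem_biUnion.mp hx
      fin_cases i
      · exact Finset.mem_insert_of_mem (ih hi)
      · simp [attrs] at hi

lemma chain_paths_cases {L : List ℕ} {p : List (ℕ × ℕ) × ℕ}
    (hp : p ∈ (chain (k := k) dfun d₀ L).paths) :
    p = (L.map (·, 0), d₀) ∨
      ∃ L₁ a L₂, L = L₁ ++ a :: L₂ ∧ p = (L₁.map (·, 0) ++ [(a, 1)], dfun a) := by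
  induction L generalizing p with
  | nil => exact Or.inl hp
  | cons b L ih =>
    rcases mem_chain_paths_cons.mp hp with ⟨q, hq, rfl⟩ | rfl
    · rcases ih hq with rfl | ⟨L₁, a, L₂, rfl, rfl⟩
      · exact Or.inl rfl
      · exact Or.inr ⟨b :: L₁, a, L₂, rfl, rfl⟩
    · exact Or.inr ⟨[], b, L, rfl, rfl⟩

lemma exists_mem_chain_paths_rowSat {L : List ℕ} {r : ℕ → ℕ} (hr : ∀ a ∈ L, r a ≤ 1) :
    ∃ p ∈ (chain (k := k) dfun d₀ L).paths, Table.rowSat r p.1 := by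
  induction L with
  | nil => exact ⟨([], d₀), rfl, Table.rowSat_nil r⟩
  | cons a L ih =>
    obtain h | h : r a = 0 ∨ r a = 1 := by have := hr a List.mem_cons_self; omega
    · obtain ⟨q, hq, hsat⟩ := ih fun b hb => hr b (List.mem_cons_of_mem a hb)
      exact ⟨_, mem_chain_paths_cons.mpr (Or.inl ⟨q, hq, rfl⟩), Table.rowSat_cons.mpr ⟨h, hsat⟩⟩
    · exact ⟨_, mem_chain_paths_cons.mpr (Or.inr rfl),
        Table.rowSat_cons.mpr ⟨h, Table.rowSat_nil r⟩⟩

lemma onWord_le_of_mem_chain_paths (ψ : PBCM) {L : List ℕ} {p : List (ℕ × ℕ) × ℕ}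
    (hp : p ∈ (chain (k := k) dfun d₀ L).paths) : ψ.onWord p.1 ≤ ψ.toFun L := by
  rcases chain_paths_cases hp with rfl | ⟨L₁, a, L₂, rfl, rfl⟩
  · simp [PBCM.onWord, Function.comp_def]
  · simpa [PBCM.onWord, Function.comp_def] using ψ.mono (L₁ ++ [a]) L₂

end DTree

lemma exists_isDDT_chain {k : ℕ} (hk : 1 < k) (ψ : PBCM) {T : Table k} {L : List ℕ}
    (hL : ∀ a ∈ L, a ∈ T.attrs) (hT : T.rows.Nonempty)
    (hrows : ∀ r ∈ T.rows, r = 0 ∨ ∃ a, r = Pi.single a 1)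
    (h₀ : ∃ d₀, ∀ r ∈ T.rows, (∀ b ∈ L, r b = 0) → d₀ ∈ T.dec r) :
    ∃ Γ : KTree k, isDDT T Γ ∧ treeComp ψ Γ ≤ ψ.toFun L := by
  obtain ⟨d₀, hd₀⟩ := h₀
  have hsingle : ∀ a, ∃ d, Pi.single a 1 ∈ T.rows → d ∈ T.dec (Pi.single a 1) := fun a => by
    by_cases ha : Pi.single a 1 ∈ T.rows
    · exact (T.dec_nonempty _ ha).imp fun d hd _ => hd
    · exact ⟨0, fun h => absurd h ha⟩
  choose dfun hdfun using hsingle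
  have hle : ∀ r ∈ T.rows, ∀ a, r a ≤ 1 := by
    intro r hr a
    rcases hrows r hr with rfl | ⟨b, rfl⟩
    · exact Nat.zero_le 1
    · rw [Pi.single_apply]
      split <;> omega
  have hone : ∀ r ∈ T.rows, ∀ a, r a = 1 → r = Pi.single a 1 := by
    intro r hr a hra
    rcases hrows r hr with rfl | ⟨b, rfl⟩
    · exact absurd hra zero_ne_one
    · rw [Pi.single_apply] at hra
      split at hra
      · subst_vars; rfl
      · exact absurd hra zero_ne_one
  refine ⟨KTree.ofDTree (DTree.chain dfun d₀ L),
    ⟨⟨hT, fun _ => DTree.chain_wf hk L, ?_, ?_, ?_⟩, rfl, fun _ => DTree.chain_det L⟩,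
    treeComp_le ψ fun p hp => DTree.onWord_le_of_mem_chain_paths ψ
      (by rwa [KTree.paths_ofDTree] at hp)⟩
  · rw [KTree.attrs_ofDTree]
    exact (DTree.chain_attrs_subset L).trans fun a ha => hL a (List.mem_toFinset.mp ha)
  · intro r hr
    simpa using DTree.exists_mem_chain_paths_rowSat (k := k) (dfun := dfun) (d₀ := d₀)
      fun a _ => hle r hr a
  · intro p hp
    rw [KTree.paths_ofDTree] at hp
    refine Or.inr fun r hr => ?_
    obtain ⟨hrT, hsat⟩ := Table.mem_applyWord_rows.mp hr
    rcases DTree.chain_paths_cases hp with rfl | ⟨L₁, a, L₂, -, rfl⟩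
    · exact hd₀ r hrT fun b hb => hsat (b, 0) (List.mem_map_of_mem hb)
    · obtain rfl := hone r hrT a (hsat (a, 1) (by simp))
      exact hdfun a hrT

lemma DTree.exists_mem_paths_card_sub_one_le_length {k : ℕ} {t : DTree k} (ht : t.det)
    (S : Finset ℕ) (hcov : ∀ a ∈ S, ∃ p ∈ t.paths, Table.rowSat (Pi.single a 1) p.1)
    (hdec : ∀ p ∈ t.paths, ∀ a ∈ S, Table.rowSat (Pi.single a 1) p.1 → p.2 = a) :
    ∃ p ∈ t.paths, S.card - 1 ≤ p.1.length := by
  induction t generalizing S with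
  | leaf d =>
    have hS : S.card ≤ 1 := Finset.card_le_one.mpr fun a ha b hb =>
      (hdec _ rfl a ha (Table.rowSat_nil _)).symm.trans (hdec _ rfl b hb (Table.rowSat_nil _))
    exact ⟨_, rfl, by simp only [List.length_nil]; omega⟩
  | node a m lab ch ih =>
    obtain ⟨hinj, hdet⟩ := ht
    have hsingle_a : ∀ c ∈ S, c ≠ a → (Pi.single c 1 : ℕ → ℕ) a = 0 :=
      fun c _ hca => Pi.single_eq_of_ne hca.symm 1
    have hlab : ∀ c ∈ S, c ≠ a → ∃ i, lab i = 0 ∧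
        ∃ q ∈ (ch i).paths, Table.rowSat (Pi.single c 1) q.1 := by
      intro c hc hca
      obtain ⟨p, hp, hsat⟩ := hcov c hc
      obtain ⟨i, q, hq, rfl⟩ := mem_paths_node.mp hp
      obtain ⟨hi, hsat⟩ := Table.rowSat_cons.mp hsat
      exact ⟨i, hi.symm.trans (hsingle_a c hc hca), q, hq, hsat⟩
    -- the rows `Pi.single c 1`, `c ≠ a`, all leave the root along the edge labelled `0`, so by
    -- determinism they all enter the same child
    by_cases h₀ : ∃ i, lab i = 0
    · obtain ⟨i₀, hi₀⟩ := h₀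
      obtain ⟨q, hq, hlen⟩ := ih i₀ (hdet i₀) (S.erase a)
        (fun c hc => by
          obtain ⟨hca, hc⟩ := Finset.mem_erase.mp hc
          obtain ⟨i, hi, hq⟩ := hlab c hc hca
          exact hinj (hi.trans hi₀.symm) ▸ hq)
        (fun q hq c hc hsat => by
          obtain ⟨hca, hc⟩ := Finset.mem_erase.mp hc
          refine hdec _ (mem_paths_node.mpr ⟨i₀, q, hq, rfl⟩) c hc ?_
          exact Table.rowSat_cons.mpr ⟨(hsingle_a c hc hca).trans hi₀.symm, hsat⟩)
      refine ⟨_, mem_paths_node.mpr ⟨i₀, q, hq, rfl⟩, ?_⟩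
      have := S.pred_card_le_card_erase (a := a)
      simp only [List.length_cons]
      omega
    · have hS : S.card ≤ 1 := Finset.card_le_one.mpr fun b hb c hc => by
        by_contra hbc
        rcases eq_or_ne b a with rfl | hba
        · exact h₀ ((hlab c hc (Ne.symm hbc)).imp fun _ h => h.1)
        · exact h₀ ((hlab b hb hba).imp fun _ h => h.1)
      obtain ⟨p, hp⟩ := (node a m lab ch).paths_nonempty
      exact ⟨p, hp, by omega⟩

noncomputable def unitTable (k : ℕ) (hk : 1 < k) (B : Finset ℕ) : Table k where
  attrs := B
  rows := B.image fun a => Pi.single a 1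
  dec r := B.filter fun a => r a = 1
  rows_mem := by
    rintro _ hr
    obtain ⟨a, ha, rfl⟩ := Finset.mem_image.mp hr
    refine ⟨fun i _ => ?_, fun i hi => Pi.single_eq_of_ne (ne_of_mem_of_not_mem ha hi).symm 1⟩
    rw [Pi.single_apply]
    split <;> omega
  dec_nonempty := by
    rintro _ hr
    obtain ⟨a, ha, rfl⟩ := Finset.mem_image.mp hr
    exact ⟨a, Finset.mem_filter.mpr ⟨ha, Pi.single_eq_same a 1⟩⟩

namespace unitTable

variable {k : ℕ} {hk : 1 < k} {B : Finset ℕ}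

lemma dec_single {a : ℕ} (ha : a ∈ B) : (unitTable k hk B).dec (Pi.single a 1) = {a} := by
  ext b
  simp only [unitTable, Finset.mem_filter, Finset.mem_singleton, Pi.single_apply]
  constructor
  · rintro ⟨-, h⟩
    by_contra hba
    simp [hba] at h
  · rintro rfl
    simp [ha]

lemma rows_nonempty (hB : B.Nonempty) : (unitTable k hk B).rows.Nonempty :=
  hB.image _

lemma attrs_of_mem_closureT {Q : Table k} (hQ : Q ∈ Table.closureT (unitTable k hk B)) :
    Q.attrs ⊆ B := by
  obtain ⟨D, -, hattrs, -⟩ := hQ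
  exact hattrs ▸ Finset.sdiff_subset

lemma rows_of_mem_closureT {Q : Table k} (hQ : Q ∈ Table.closureT (unitTable k hk B)) :
    Q.rows = B.image fun a => if a ∈ Q.attrs then Pi.single a 1 else 0 := by
  obtain ⟨D, -, hattrs, hrows⟩ := hQ
  rw [hrows, hattrs]
  simp only [unitTable, Finset.image_image]
  refine Finset.image_congr fun a _ => funext fun i => ?_
  by_cases ha : a ∈ B \ D <;> by_cases hia : i = a <;> simp_all

variable {ψ : PBCM} {n : ℕ}

lemma exists_isDDT_of_mem_closureT (hψ : ∀ α : List ℕ, (∀ a ∈ α, a ∈ B) → ψ.toFun α = n * α.length)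
    (hB : B.Nonempty) {Q : Table k} (hQ : Q ∈ Table.closureT (unitTable k hk B)) :
    ∃ Γ, isDDT Q Γ ∧ treeComp ψ Γ ≤ n * (B.card - 1) := by
  have hsub := attrs_of_mem_closureT hQ
  have hrows := rows_of_mem_closureT hQ
  set g : ℕ → ℕ → ℕ := fun a => if a ∈ Q.attrs then Pi.single a 1 else 0 with hg
  -- Leave out of the chain an attribute `a₀` missing from `Q` if there is one: then only the zero
  -- row vanishes on the chain, and otherwise only `g a₀` does.
  obtain ⟨a₀, ha₀B, ha₀⟩ : ∃ a₀ ∈ B, a₀ ∈ Q.attrs → Q.attrs = B := by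
    by_cases hS : Q.attrs = B
    · obtain ⟨a₀, ha₀⟩ := hB
      exact ⟨a₀, ha₀, fun _ => hS⟩
    · obtain ⟨a₀, ha₀B, ha₀⟩ := Finset.exists_of_ssubset (hsub.ssubset_of_ne hS)
      exact ⟨a₀, ha₀B, fun h => absurd h ha₀⟩
  set L := (Q.attrs.erase a₀).sort (· ≤ ·)
  have hL : ∀ a ∈ L, a ∈ Q.attrs := fun a ha => Finset.mem_of_mem_erase ((Finset.mem_sort _).mp ha)
  have hg₀ : g a₀ ∈ Q.rows := hrows ▸ Finset.mem_image_of_mem g ha₀B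
  have hvanish : ∀ a ∈ B, (∀ b ∈ L, g a b = 0) → g a = g a₀ := by
    intro a haB h
    by_cases haQ : a ∈ Q.attrs
    · by_contra hne
      have haL : a ∈ L :=
        (Finset.mem_sort _).mpr (Finset.mem_erase.mpr ⟨fun h => hne (h ▸ rfl), haQ⟩)
      simpa [hg, haQ] using h a haL
    · have ha₀Q : a₀ ∉ Q.attrs := fun h => haQ ((ha₀ h).symm ▸ haB)
      simp [hg, haQ, ha₀Q]
  obtain ⟨Γ, hΓ, hc⟩ := exists_isDDT_chain hk ψ hL ⟨_, hg₀⟩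
    (by
      rw [hrows]
      rintro _ hr
      obtain ⟨a, -, rfl⟩ := Finset.mem_image.mp hr
      by_cases ha : a ∈ Q.attrs
      · exact Or.inr ⟨a, if_pos ha⟩
      · exact Or.inl (if_neg ha))
    (by
      obtain ⟨d₀, hd₀⟩ := Q.dec_nonempty _ hg₀
      refine ⟨d₀, fun r hr h => ?_⟩
      rw [hrows] at hr
      obtain ⟨a, haB, rfl⟩ := Finset.mem_image.mp hr
      exact hvanish a haB h ▸ hd₀)
  refine ⟨Γ, hΓ, hc.trans ?_⟩
  rw [hψ L fun a ha => hsub (hL a ha), Finset.length_sort]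
  exact Nat.mul_le_mul_left n ((Finset.card_le_card (Finset.erase_subset_erase a₀ hsub)).trans
    (Finset.card_erase_of_mem ha₀B).le)

lemma le_psiD (hψ : ∀ α : List ℕ, (∀ a ∈ α, a ∈ B) → ψ.toFun α = n * α.length)
    (hB : B.Nonempty) : n * (B.card - 1) ≤ psiD ψ (unitTable k hk B) := by
  obtain ⟨Γ₀, hΓ₀, -⟩ := exists_isDDT_of_mem_closureT hψ hB (Table.self_mem_closureT _)
  refine _root_.le_psiD hΓ₀ fun Γ ⟨⟨_, _, hattrs, hcov, hdec⟩, hn, hdet⟩ => ?_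
  obtain ⟨t, rfl⟩ := KTree.exists_eq_ofDTree_of_n_eq_zero hn
  simp only [KTree.paths_ofDTree] at hcov hdec
  obtain ⟨p, hp, hlen⟩ := DTree.exists_mem_paths_card_sub_one_le_length (t := t) (hdet 0) B
    (fun a ha => hcov _ (Finset.mem_image_of_mem _ ha))
    (fun p hp a ha hsat => by
      have hrow : Pi.single a 1 ∈ ((unitTable k hk B).applyWord p.1).rows :=
        Table.mem_applyWord_rows.mpr ⟨Finset.mem_image_of_mem _ ha, hsat⟩
      rcases hdec p hp with hempty | hall
      · simp [hempty] at hrow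
      · simpa [dec_single ha] using hall _ hrow)
  have hp' : p ∈ (KTree.ofDTree t).paths := by rwa [KTree.paths_ofDTree]
  calc n * (B.card - 1) ≤ n * p.1.length := Nat.mul_le_mul_left n hlen
    _ = ψ.onWord p.1 := by
      rw [PBCM.onWord, hψ, List.length_map]
      intro a ha
      obtain ⟨q, hq, rfl⟩ := List.mem_map.mp ha
      exact hattrs (KTree.fst_mem_attrs hp' hq)
    _ ≤ treeComp _ (KTree.ofDTree t) := le_treeComp _ hp'

lemma psiA_le (hψ : ∀ α : List ℕ, (∀ a ∈ α, a ∈ B) → ψ.toFun α = n * α.length)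
    (hB : B.Nonempty) : psiA ψ (unitTable k hk B) ≤ n := by
  have hcard : B.card - 1 + 1 = B.card := Nat.sub_add_cancel hB.card_pos
  set e : Fin (B.card - 1 + 1) → ℕ := fun i => B.equivFin.symm (Fin.cast hcard i)
  have he : ∀ i, e i ∈ B := fun i => (B.equivFin.symm _).2
  have he_surj : ∀ a ∈ B, ∃ i, e i = a :=
    fun a ha => ⟨Fin.cast hcard.symm (B.equivFin ⟨a, ha⟩), by simp [e]⟩
  -- guess the attribute with value `1` and check it
  let Γ : KTree k := ⟨B.card - 1, fun i => .node (e i) 0 (fun _ => 1) fun _ => .leaf (e i)⟩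
  have hpaths : ∀ p, p ∈ Γ.paths ↔ ∃ i, ([(e i, 1)], e i) = p := by
    simp [Γ, KTree.paths, DTree.paths]
  refine (psiA_le_treeComp (Γ := Γ) ⟨rows_nonempty hB, fun _ => ⟨fun _ => hk, fun _ => trivial⟩,
    ?_, ?_, ?_⟩).trans (treeComp_le ψ ?_)
  · intro x hx
    obtain ⟨i, -, hi⟩ := Finset.mem_biUnion.mp hx
    simp only [Γ, DTree.attrs, Finset.mem_insert] at hi
    rcases hi with rfl | hi
    · exact he i
    · simp at hi
  · rintro _ hr
    obtain ⟨a, ha, rfl⟩ := Finset.mem_image.mp hr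
    obtain ⟨i, rfl⟩ := he_surj a ha
    exact ⟨_, (hpaths _).mpr ⟨i, rfl⟩, by simp [Table.rowSat]⟩
  · intro p hp
    obtain ⟨i, rfl⟩ := (hpaths p).mp hp
    refine Or.inr fun r hr => ?_
    obtain ⟨hrT, hsat⟩ := Table.mem_applyWord_rows.mp hr
    obtain ⟨a, ha, rfl⟩ := Finset.mem_image.mp hrT
    have hia : e i = a := by
      by_contra h
      simpa [Pi.single_eq_of_ne h] using hsat (e i, 1) List.mem_cons_self
    simp [hia, dec_single ha]
  · intro p hp
    obtain ⟨i, rfl⟩ := (hpaths p).mp hp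
    simp [PBCM.onWord, hψ [e i] (List.forall_mem_singleton.mpr (he i))]

end unitTable

def block (j M : ℕ) : Finset ℕ := (Finset.range (M + 1)).image (Nat.pair j)

lemma card_block (j M : ℕ) : (block j M).card = M + 1 := by
  rw [block, Finset.card_image_of_injective _ fun _ _ h => (Nat.pair_eq_pair.mp h).2,
    Finset.card_range]

lemma block_nonempty (j M : ℕ) : (block j M).Nonempty :=
  Finset.card_pos.mp (by rw [card_block]; exact Nat.succ_pos M)

lemma unpair_fst_of_mem_block {j M a : ℕ} (ha : a ∈ block j M) : a.unpair.1 = j := by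
  obtain ⟨i, -, rfl⟩ := Finset.mem_image.mp ha
  simp

def blockCM : BCM := weightCM (fun a => a.unpair.1 + 1) fun _ => Nat.succ_pos _

lemma blockCM_toFun_of_forall_mem_block {j M : ℕ} (α : List ℕ) (h : ∀ a ∈ α, a ∈ block j M) :
    blockCM.toFun α = (j + 1) * α.length :=
  weightCM_toFun_of_forall_eq fun a ha => by rw [unpair_fst_of_mem_block (h a ha)]

noncomputable def blockTable (k : ℕ) (hk : 1 < k) (φ : ℕ → ℕ) (j : ℕ) : Table k :=
  unitTable k hk (block j (φ (j + 1) / (j + 1) + 1))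

def blockClass (k : ℕ) (hk : 1 < k) (φ : ℕ → ℕ) : Set (Table k) :=
  ⋃ j, Table.closureT (blockTable k hk φ j)

section blockClass

variable {k : ℕ} {hk : 1 < k} {φ : ℕ → ℕ}

lemma psiA_blockTable_le (j : ℕ) : psiA blockCM.toPBCM (blockTable k hk φ j) ≤ j + 1 :=
  unitTable.psiA_le (blockCM_toFun_of_forall_mem_block) (block_nonempty _ _)

lemma le_psiD_blockTable (j : ℕ) : φ (j + 1) ≤ psiD blockCM.toPBCM (blockTable k hk φ j) :=
  calc φ (j + 1) ≤ (j + 1) * (φ (j + 1) / (j + 1) + 1) :=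
        (Nat.lt_mul_div_succ _ (Nat.succ_pos j)).le
    _ ≤ psiD blockCM.toPBCM (blockTable k hk φ j) := by
      have := unitTable.le_psiD (hk := hk) blockCM_toFun_of_forall_mem_block
        (block_nonempty j (φ (j + 1) / (j + 1) + 1))
      rwa [card_block, Nat.add_sub_cancel] at this

lemma psiD_le_of_mem_blockClass (hφ : Monotone φ) {T : Table k} (hT : T ∈ blockClass k hk φ)
    {n : ℕ} (hTn : psiA blockCM.toPBCM T ≤ n) : psiD blockCM.toPBCM T ≤ φ n + n := by
  obtain ⟨j, hj⟩ := Set.mem_iUnion.mp hT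
  by_cases hjn : j + 1 ≤ n
  · obtain ⟨Γ, hΓ, hc⟩ := unitTable.exists_isDDT_of_mem_closureT
      blockCM_toFun_of_forall_mem_block (block_nonempty _ _) hj
    calc psiD blockCM.toPBCM T ≤ treeComp blockCM.toPBCM Γ := psiD_le_treeComp hΓ
      _ ≤ (j + 1) * (φ (j + 1) / (j + 1) + 1) := by simpa [card_block] using hc
      _ ≤ φ (j + 1) + (j + 1) := by
        rw [mul_add_one]
        exact Nat.add_le_add_right (Nat.mul_div_le _ _) _
      _ ≤ φ n + n := Nat.add_le_add (hφ hjn) hjn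
  · have hattrs : ∀ a ∈ T.attrs, j + 1 ≤ blockCM.toFun [a] := fun a ha => by
      rw [blockCM_toFun_of_forall_mem_block _
        (List.forall_mem_singleton.mpr (unitTable.attrs_of_mem_closureT hj ha))]
      simp
    rw [psiD_eq_zero_of_psiA_lt hattrs (by omega)]
    exact Nat.zero_le _

end blockClass

theorem stmt2_general {k : ℕ} (hk : 2 ≤ k) (φ : ℕ → ℕ) (hmono : Monotone φ)
    (h0 : φ 0 = 0) :
    ∃ (A : Set (Table k)) (ψ : BCM), IsClosedClass A ∧ NontrivialClass A ∧
      (∀ n, (HSet ψ.toPBCM A n).Finite) ∧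
      ∀ n, φ n ≤ Hfun ψ.toPBCM A n ∧ Hfun ψ.toPBCM A n ≤ φ n + n := by
  have hbound : ∀ n, ∀ c ∈ HSet blockCM.toPBCM (blockClass k hk φ) n, c ≤ φ n + n := by
    rintro n _ ⟨T, hT, hTn, rfl⟩
    exact psiD_le_of_mem_blockClass hmono hT hTn
  have hfin : ∀ n, (HSet blockCM.toPBCM (blockClass k hk φ) n).Finite :=
    fun n => (Set.finite_Iic _).subset (hbound n)
  have hmem : ∀ j, blockTable k hk φ j ∈ blockClass k hk φ :=
    fun j => Set.mem_iUnion.mpr ⟨j, Table.self_mem_closureT _⟩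
  refine ⟨blockClass k hk φ, blockCM, isClosedClass_iUnion_closureT _,
    ⟨_, hmem 0, unitTable.rows_nonempty (block_nonempty _ _)⟩, hfin,
    fun n => ⟨?_, csSup_le' (hbound n)⟩⟩
  cases n with
  | zero => simp [h0]
  | succ j =>
    exact (le_psiD_blockTable j).trans
      (le_csSup (hfin _).bddAbove ⟨_, hmem j, psiA_blockTable_le j, rfl⟩)

/-- **Theorem 5.** For any nondecreasing `φ : ℕ → ℕ` with `φ(n) ≥ n` and `φ(0) = 0`
there exist a nontrivial closed class `A ⊆ M_k^∞` and a bounded complexity measure `ψ`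
such that `H^∞_{ψ,A}` is everywhere defined and `φ(n) ≤ H^∞_{ψ,A}(n) ≤ φ(n) + n`. -/
theorem stmt2 {k : ℕ} (hk : 2 ≤ k) (φ : ℕ → ℕ) (hmono : Monotone φ)
    (hge : ∀ n, n ≤ φ n) (h0 : φ 0 = 0) :
    ∃ (A : Set (Table k)) (ψ : BCM), IsClosedClass A ∧ NontrivialClass A ∧
      (∀ n, (HSet ψ.toPBCM A n).Finite) ∧
      ∀ n, φ n ≤ Hfun ψ.toPBCM A n ∧ Hfun ψ.toPBCM A n ≤ φ n + n :=
  stmt2_general hk φ hmono h0
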